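/- Let m₁,…,m_r be pairwise coprime integers, each at least 2, and let M be a subcontinuum of Σ such that p₀ ∈ M and η_i(M) = Σ_{m_i} for each i ∈ {1,…,r}. Then for every n ∈ ℕ and every i ∈ {1,…,r}, the map (ρ_i ∘ π_n)|_M : M → S¹ admits no lifting through e: there is no continuous h : M → ℝ with e ∘ h = (ρ_i ∘ π_n)|_M. -/

import Mathlib

open scoped Real NNReal

/-- The exponential covering map `e : ℝ → S¹`, `e t = exp (2 π i t)`. -/
noncomputable def eMap (t : ℝ) : Circle := Circle.exp (2 * Real.pi * t)

/-- The `r`-torus `T = (S¹)^r`. -/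
abbrev Torus (r : ℕ) := Fin r → Circle

/-- The point `1⁻ = (1,…,1)` of the torus. -/
noncomputable def onePt (r : ℕ) : Torus r := fun _ => 1

/-- The map `f(z₁,…,z_r) = (z₁^{m₁},…,z_r^{m_r})` on the torus. -/
noncomputable def fPow {r : ℕ} (m : Fin r → ℕ) (z : Torus r) : Torus r := fun i => z i ^ m i

/-- `γ* : [0,∞) → T`, defined by `γ*(t) = γ(t-k+1)` for `t ∈ [k-1,k]`. -/
noncomputable def loopExt {r : ℕ} (γ : Path (onePt r) (onePt r)) (t : ℝ≥0) : Torus r :=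
  γ ⟨Int.fract (t : ℝ), (Int.fract_nonneg _), (Int.fract_lt_one _).le⟩

/-- The standard loop `λ_s(t) = e(st)` in the circle. -/
noncomputable def lam (s : ℤ) : Path (1 : Circle) 1 where
  toFun t := eMap (s * t)
  continuous_toFun := by
    exact Circle.exp.continuous.comp (by fun_prop)
  source' := by simp [eMap]
  target' := by
    simp only [eMap, Set.Icc.coe_one, mul_one]
    rw [show (2 * Real.pi * (s:ℝ)) = (s:ℝ) * (2 * Real.pi) by ring]
    exact Circle.exp_int_mul_two_pi s

/-- The `m`-adic solenoid, as the inverse limit of circles under `z ↦ z^m`. -/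
def Solenoid (m : ℕ) : Type := {x : ℕ → Circle // ∀ n, (x (n + 1)) ^ m = x n}

noncomputable instance (m : ℕ) : TopologicalSpace (Solenoid m) :=
  instTopologicalSpaceSubtype

/-- The product `Σ = Σ_{m₁} × ⋯ × Σ_{m_r}` identified with the inverse limit of `(T, f)`. -/
def SigmaProd {r : ℕ} (m : Fin r → ℕ) : Type :=
  {x : ℕ → Torus r // ∀ n, fPow m (x (n + 1)) = x n}

noncomputable instance {r : ℕ} (m : Fin r → ℕ) : TopologicalSpace (SigmaProd m) :=
  instTopologicalSpaceSubtype

/-- The `n`-th coordinate projection `π_n : Σ → T`. -/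
def piProj {r : ℕ} (m : Fin r → ℕ) (n : ℕ) (x : SigmaProd m) : Torus r := x.1 n

/-- The projection `η_i : Σ → Σ_{m_i}`. -/
def eta {r : ℕ} (m : Fin r → ℕ) (i : Fin r) (x : SigmaProd m) : Solenoid (m i) :=
  ⟨fun n => x.1 n i, fun n => congrFun (x.2 n) i⟩

/-- The point `p₀ = (1⁻, 1⁻, …) ∈ Σ`. -/
noncomputable def basePt {r : ℕ} (m : Fin r → ℕ) : SigmaProd m :=
  ⟨fun _ => onePt r, fun _ => funext fun _ => one_pow _⟩

/-!
If `h` lifts the `n`-th coordinate `zₙ` of the `i`-th solenoid factor on `M` and vanishes at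
`p₀`, then `h / mᵏ` lifts `zₙ₊ₖ`: the quotient of `zₙ₊ₖ` by `e(h / mᵏ)` is continuous with values
in the finite set of `m`-th roots of unity, hence constant on the connected set `M`, and it is
`1` at `p₀`. As `M` maps onto `Σ_m`, some point of `M` has `zₙ₊ₖ = e(1/2)`, where therefore
`|h| ≥ mᵏ / 2`; this contradicts the boundedness of `h` on the compact set `M`.
-/

lemma eMap_zero : eMap 0 = 1 := by simp [eMap]

lemma eMap_sub (a b : ℝ) : eMap (a - b) = eMap a / eMap b := by
  simp only [eMap, mul_sub, Circle.exp_sub]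

lemma eMap_natCast_mul (k : ℕ) (t : ℝ) : eMap (k * t) = eMap t ^ k := by
  rw [eMap, eMap, ← Circle.exp_natCast_mul, mul_left_comm]

lemma continuous_eMap : Continuous eMap :=
  Circle.exp.continuous.comp (by fun_prop)

lemma eMap_eq_eMap_iff {a b : ℝ} : eMap a = eMap b ↔ ∃ z : ℤ, a = b + z := by
  simp only [eMap, Circle.exp_eq_exp]
  refine exists_congr fun z => ⟨fun h => ?_, fun h => by rw [h]; ring⟩
  have : (0 : ℝ) < 2 * π := by positivity
  nlinarith

lemma half_le_abs_of_eMap_eq_eMap_half {t : ℝ} (h : eMap t = eMap (1 / 2)) : 1 / 2 ≤ |t| := by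
  obtain ⟨z, rfl⟩ := eMap_eq_eMap_iff.mp h
  rcases le_or_gt 0 z with hz | hz
  · have : (0 : ℝ) ≤ z := by exact_mod_cast hz
    rw [abs_of_nonneg (by linarith)]
    linarith
  · have : (z : ℝ) ≤ -1 := by exact_mod_cast Int.le_sub_one_of_lt hz
    rw [abs_of_neg (by linarith)]
    linarith

lemma Circle.finite_setOf_pow_eq_one {k : ℕ} (hk : 0 < k) : {z : Circle | z ^ k = 1}.Finite :=
  ((Polynomial.nthRoots k (1 : ℂ)).toFinset.finite_toSet.preimage
    Circle.coe_injective.injOn).subset fun z hz => by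
      rw [Set.mem_preimage, Finset.mem_coe, Multiset.mem_toFinset, Polynomial.mem_nthRoots hk]
      exact congrArg ((↑) : Circle → ℂ) (show z ^ k = 1 from hz)

lemma PreconnectedSpace.eq_of_pow_eq_one {X : Type*} [TopologicalSpace X] [PreconnectedSpace X]
    {k : ℕ} (hk : 0 < k) {φ : X → Circle} (hφ : Continuous φ) (hφk : ∀ x, φ x ^ k = 1)
    (x y : X) : φ x = φ y := by
  have := (Circle.finite_setOf_pow_eq_one hk).to_subtype
  exact congrArg Subtype.val <| PreconnectedSpace.constant inferInstance
    (f := fun x => (⟨φ x, hφk x⟩ : {z : Circle | z ^ k = 1})) (hφ.subtype_mk _)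

section Lifts

variable {X : Type*} [TopologicalSpace X] {m : ℕ}

lemma eMap_div_eq_of_pow_eq [PreconnectedSpace X] (hm : 0 < m) {g : X → ℝ} {v : X → Circle}
    (hg : Continuous g) (hv : Continuous v) (hgv : ∀ x, eMap (g x) = v x ^ m) {x₀ : X}
    (hx₀ : eMap (g x₀ / m) = v x₀) (x : X) : eMap (g x / m) = v x := by
  have hroot : ∀ x, (v x / eMap (g x / m)) ^ m = 1 := fun x => by
    rw [div_pow, ← eMap_natCast_mul, mul_div_cancel₀ _ (by positivity), hgv, div_self']
  have hconst := PreconnectedSpace.eq_of_pow_eq_one hm (φ := fun x => v x / eMap (g x / m))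
    (hv.div' (continuous_eMap.comp (hg.div_const _))) hroot x x₀
  rw [hx₀, div_self', _root_.div_eq_one] at hconst
  exact hconst.symm

lemma eMap_div_pow_eq_of_tower [PreconnectedSpace X] (hm : 0 < m) {u : ℕ → X → Circle}
    (hu : ∀ k, Continuous (u k)) (hpow : ∀ k x, u (k + 1) x ^ m = u k x) {x₀ : X}
    (hx₀ : ∀ k, u k x₀ = 1) {g : X → ℝ} (hg : Continuous g) (hg₀ : g x₀ = 0)
    (hgu : ∀ x, eMap (g x) = u 0 x) (k : ℕ) (x : X) : eMap (g x / m ^ k) = u k x := by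
  induction k generalizing x with
  | zero => simpa using hgu x
  | succ k ih =>
    have hstep := eMap_div_eq_of_pow_eq hm (hg.div_const (m ^ k : ℝ)) (hu (k + 1))
      (fun x => (ih x).trans (hpow k x).symm) (x₀ := x₀)
      (by rw [hg₀, zero_div, zero_div, eMap_zero, hx₀]) x
    rwa [div_div, ← pow_succ] at hstep

theorem not_exists_lift_of_tower [PreconnectedSpace X] [CompactSpace X] (hm : 1 < m)
    {u : ℕ → X → Circle} (hu : ∀ k, Continuous (u k)) (hpow : ∀ k x, u (k + 1) x ^ m = u k x)
    {x₀ : X} (hx₀ : ∀ k, u k x₀ = 1) (hhalf : ∀ k, ∃ x, u k x = eMap (1 / 2)) :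
    ¬ ∃ h : X → ℝ, Continuous h ∧ ∀ x, eMap (h x) = u 0 x := by
  rintro ⟨h, hh, hhu⟩
  set g : X → ℝ := fun x => h x - h x₀
  have hg : Continuous g := hh.sub continuous_const
  have hgu : ∀ x, eMap (g x) = u 0 x := fun x => by
    rw [eMap_sub, hhu, hhu, hx₀, div_one]
  obtain ⟨B, hB⟩ := isCompact_univ.exists_bound_of_continuousOn hg.continuousOn
  obtain ⟨k, hk⟩ := pow_unbounded_of_one_lt (2 * B) (Nat.one_lt_cast.mpr hm)
  obtain ⟨x, hx⟩ := hhalf k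
  have hlift := eMap_div_pow_eq_of_tower (by omega) hu hpow hx₀ hg (sub_self _) hgu k x
  have hhalf_le := half_le_abs_of_eMap_eq_eMap_half (hlift.trans hx)
  have hmk : (0 : ℝ) < (m : ℝ) ^ k := by positivity
  rw [abs_div, abs_of_pos hmk, le_div_iff₀ hmk] at hhalf_le
  have := hB x (Set.mem_univ x)
  rw [Real.norm_eq_abs] at this
  linarith

end Lifts

lemma Solenoid.exists_apply_eq_eMap {m : ℕ} (hm : m ≠ 0) (N : ℕ) (s : ℝ) :
    ∃ y : Solenoid m, y.1 N = eMap s := by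
  have hm' : (m : ℝ) ≠ 0 := by exact_mod_cast hm
  refine ⟨⟨fun j => eMap (s * m ^ N / m ^ j), fun j => ?_⟩, ?_⟩
  · rw [← eMap_natCast_mul]
    congr 1
    field_simp
    ring
  · exact congrArg eMap (mul_div_cancel_right₀ _ (pow_ne_zero _ hm'))

lemma continuous_piProj {r : ℕ} (m : Fin r → ℕ) (n : ℕ) : Continuous (piProj m n) :=
  (continuous_apply n).comp continuous_subtype_val

theorem no_lift_on_subcontinuum_general {r : ℕ} (m : Fin r → ℕ)
    (hm : ∀ i, 2 ≤ m i)
    (M : Set (SigmaProd m)) (hMc : IsCompact M) (hMconn : IsConnected M)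
    (hp₀ : basePt m ∈ M) (honto : ∀ i, eta m i '' M = Set.univ) :
    ∀ (n : ℕ) (i : Fin r),
      ¬ ∃ h : M → ℝ, Continuous h ∧ ∀ p : M, eMap (h p) = piProj m n p.1 i := by
  intro n i
  have := isConnected_iff_connectedSpace.mp hMconn
  have := isCompact_iff_compactSpace.mp hMc
  refine not_exists_lift_of_tower (hm i) (u := fun k (p : M) => piProj m (n + k) p.1 i)
    (fun k => (continuous_apply i).comp ((continuous_piProj m _).comp continuous_subtype_val))
    (fun k (p : M) => congrFun (p.1.2 (n + k)) i) (x₀ := ⟨basePt m, hp₀⟩) (fun _ => rfl)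
    fun k => ?_
  obtain ⟨y, hy⟩ := Solenoid.exists_apply_eq_eMap (show m i ≠ 0 by have := hm i; omega)
    (n + k) (1 / 2)
  obtain ⟨x, hxM, hx⟩ : y ∈ eta m i '' M := honto i ▸ Set.mem_univ y
  exact ⟨⟨x, hxM⟩, (congrArg (fun y : Solenoid (m i) => y.1 (n + k)) hx).trans hy⟩

/-- **Lemma 4.** For a subcontinuum `M` of `Σ` containing `p₀` and projecting onto each
solenoid factor, no map `(ρ_i ∘ π_n)|_M` can be lifted through `e : ℝ → S¹`. -/
theorem no_lift_on_subcontinuum {r : ℕ} (hr : 0 < r) (m : Fin r → ℕ)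
    (hm : ∀ i, 2 ≤ m i) (hcop : ∀ i j, i ≠ j → Nat.Coprime (m i) (m j))
    (M : Set (SigmaProd m)) (hMc : IsCompact M) (hMconn : IsConnected M)
    (hp₀ : basePt m ∈ M) (honto : ∀ i, eta m i '' M = Set.univ) :
    ∀ (n : ℕ) (i : Fin r),
      ¬ ∃ h : M → ℝ, Continuous h ∧ ∀ p : M, eMap (h p) = piProj m n p.1 i :=
  no_lift_on_subcontinuum_general m hm M hMc hMconn hp₀ honto
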